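/- (Data processing for min-entropy under measurement) For a classical-quantum state rho_{XE} and any POVM measurement on E producing a classical outcome F, the classical min-entropy of the resulting joint distribution P_{XF} satisfies H_min(X|F)_P >= H_min(X|E)_rho, and the same holds for the epsilon-smooth versions. -/

import Mathlib

open Matrix ComplexOrder Kronecker Finset

/-- The trace norm `‖A‖₁ = tr √(AᴴA)` of a complex matrix. -/
noncomputable def traceNorm {n : Type*} [Fintype n] [DecidableEq n]
    (A : Matrix n n ℂ) : ℝ :=
  ((Matrix.posSemidef_conjTranspose_mul_self A).isHermitian.eigenvectorUnitary.1 *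
    diagonal ((fun r : ℝ => (r : ℂ)) ∘ (√·) ∘ (Matrix.posSemidef_conjTranspose_mul_self A).isHermitian.eigenvalues) *
    (star (Matrix.posSemidef_conjTranspose_mul_self A).isHermitian.eigenvectorUnitary :
      Matrix n n ℂ)).trace.re

/-- Quantum conditional min-entropy of a bipartite operator on `X ⊗ E`:
`H_min(X|E)_ρ = sup {λ : ∃ density operator σ_E, 2^{-λ}(1_X ⊗ σ_E) ≥ ρ}`. -/
noncomputable def HminQ {X E : Type*} [Fintype X] [DecidableEq X]
    [Fintype E] [DecidableEq E] (ρ : Matrix (X × E) (X × E) ℂ) : ℝ :=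
  sSup {l : ℝ | ∃ σ : Matrix E E ℂ, σ.PosSemidef ∧ σ.trace = 1 ∧
    ((((2 : ℝ) ^ (-l) : ℝ) : ℂ) • ((1 : Matrix X X ℂ) ⊗ₖ σ) - ρ).PosSemidef}

/-- Smooth quantum conditional min-entropy (smoothing over the trace-distance
`ε`-ball of sub-normalized positive operators). -/
noncomputable def HminQSmooth {X E : Type*} [Fintype X] [DecidableEq X]
    [Fintype E] [DecidableEq E] (ε : ℝ) (ρ : Matrix (X × E) (X × E) ℂ) : ℝ :=
  sSup {l : ℝ | ∃ ρ' : Matrix (X × E) (X × E) ℂ, ρ'.PosSemidef ∧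
    traceNorm (ρ' - ρ) ≤ ε ∧
    ∃ σ : Matrix E E ℂ, σ.PosSemidef ∧ σ.trace = 1 ∧
      ((((2 : ℝ) ^ (-l) : ℝ) : ℂ) • ((1 : Matrix X X ℂ) ⊗ₖ σ) - ρ').PosSemidef}

/-- Classical conditional min-entropy of a joint distribution:
`2^{-H_min(X|F)} = ∑_f max_x P(x,f)`. -/
noncomputable def HminCl {X F : Type*} [Fintype X] [Nonempty X] [Fintype F]
    (P : X → F → ℝ) : ℝ :=
  -Real.logb 2 (∑ f : F, (univ : Finset X).sup' univ_nonempty (fun x => P x f))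

/-- Smooth classical conditional min-entropy (smoothing over the L1 `ε`-ball of
sub-normalized distributions). -/
noncomputable def HminClSmooth {X F : Type*} [Fintype X] [Nonempty X] [Fintype F]
    (ε : ℝ) (P : X → F → ℝ) : ℝ :=
  sSup {l : ℝ | ∃ P' : X → F → ℝ, (∀ x f, 0 ≤ P' x f) ∧
    (∑ x : X, ∑ f : F, |P x f - P' x f| ≤ ε) ∧
    (∑ f : F, (univ : Finset X).sup' univ_nonempty (fun x => P' x f) ≤ (2 : ℝ) ^ (-l))}

/-!
Reading `X` in its basis and measuring `E` with a POVM `M` turns `ρ` into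
`P(x, f) = tr(ρ (|x⟩⟨x| ⊗ M f))`. If `2^{-λ} (1 ⊗ σ) ≥ ρ`, testing this operator inequality
against `|x⟩⟨x| ⊗ M f` gives `P(x, f) ≤ 2^{-λ} tr(σ M f)` for every `x`; summing the maxima over `f`
and using `∑ f, M f = 1` bounds the guessing probability by `2^{-λ}`. For the smooth versions,
the measurement maps a smoothed operator `ρ'` to a distribution `P'` with
`‖P - P'‖₁ ≤ ‖ρ - ρ'‖₁`, because `Δ = Δ⁺ - Δ⁻` and `‖Δ‖₁ = tr Δ⁺ + tr Δ⁻`.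
-/

open scoped MatrixOrder

section TraceNorm

variable {n : Type*} [Fintype n] [DecidableEq n]

lemma traceNorm_eq_re_trace_abs (A : Matrix n n ℂ) : traceNorm A = (CFC.abs A).trace.re := by
  rw [CFC.abs, star_eq_conjTranspose,
    CFC.sqrt_eq_real_sqrt _ (posSemidef_conjTranspose_mul_self A).nonneg, cfcₙ_eq_cfc,
    (posSemidef_conjTranspose_mul_self A).isHermitian.cfc_eq]
  rfl

lemma traceNorm_neg (A : Matrix n n ℂ) : traceNorm (-A) = traceNorm A := by
  rw [traceNorm_eq_re_trace_abs, traceNorm_eq_re_trace_abs, CFC.abs_neg]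

lemma Matrix.PosSemidef.traceNorm_eq {A : Matrix n n ℂ} (hA : A.PosSemidef) :
    traceNorm A = A.trace.re := by
  rw [traceNorm_eq_re_trace_abs, CFC.abs_of_nonneg A hA.nonneg]

lemma Matrix.PosSemidef.re_trace_mul_nonneg {A B : Matrix n n ℂ} (hA : A.PosSemidef)
    (hB : B.PosSemidef) : 0 ≤ (A * B).trace.re := by
  obtain ⟨C, rfl⟩ : ∃ C : Matrix n n ℂ, A = Cᴴ * C :=
    ⟨CFC.sqrt A, by rw [(CFC.sqrt_nonneg A).posSemidef.1, CFC.sqrt_mul_sqrt_self A hA.nonneg]⟩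
  rw [mul_assoc, trace_mul_comm]
  exact (Complex.nonneg_iff.mp (hB.mul_mul_conjTranspose_same C).trace_nonneg).1

end TraceNorm

section Measurement

variable {X E F : Type*} [Fintype E]

/-- The outcome distribution `P(x, f) = tr(ρ (|x⟩⟨x| ⊗ M f))` of reading `X` in its basis and
measuring `E` with the POVM `M`. -/
def measuredDist (ρ : Matrix (X × E) (X × E) ℂ) (M : F → Matrix E E ℂ) (x : X) (f : F) : ℝ :=
  (ρ.submatrix (Prod.mk x) (Prod.mk x) * M f).trace.re

lemma measuredDist_sub (A B : Matrix (X × E) (X × E) ℂ) (M : F → Matrix E E ℂ) (x : X) (f : F) :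
    measuredDist (A - B) M x f = measuredDist A M x f - measuredDist B M x f := by
  simp only [measuredDist, submatrix_sub, Pi.sub_apply, Matrix.sub_mul, trace_sub, Complex.sub_re]

lemma trace_eq_sum_trace_submatrix [Fintype X] (A : Matrix (X × E) (X × E) ℂ) :
    A.trace = ∑ x, (A.submatrix (Prod.mk x) (Prod.mk x)).trace := by
  simp only [trace, Matrix.diag, Fintype.sum_prod_type, submatrix_apply]

variable [DecidableEq E]

lemma measuredDist_nonneg {ρ : Matrix (X × E) (X × E) ℂ} (hρ : ρ.PosSemidef)
    {M : F → Matrix E E ℂ} (hM : ∀ f, (M f).PosSemidef) (x : X) (f : F) :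
    0 ≤ measuredDist ρ M x f :=
  (hρ.submatrix _).re_trace_mul_nonneg (hM f)

lemma sum_re_trace_mul_povm [Fintype F] {M : F → Matrix E E ℂ} (hMsum : ∑ f, M f = 1)
    (A : Matrix E E ℂ) : ∑ f, (A * M f).trace.re = A.trace.re := by
  rw [← Complex.re_sum, ← trace_sum, ← mul_sum, hMsum, mul_one]

lemma sum_sum_measuredDist [Fintype X] [Fintype F] {M : F → Matrix E E ℂ}
    (hMsum : ∑ f, M f = 1) (ρ : Matrix (X × E) (X × E) ℂ) :
    ∑ x, ∑ f, measuredDist ρ M x f = ρ.trace.re := by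
  simp only [measuredDist, sum_re_trace_mul_povm hMsum, trace_eq_sum_trace_submatrix ρ,
    Complex.re_sum]

lemma sum_abs_measuredDist_le_traceNorm [Fintype X] [DecidableEq X] [Fintype F]
    {Δ : Matrix (X × E) (X × E) ℂ} (hΔ : Δ.IsHermitian) {M : F → Matrix E E ℂ}
    (hM : ∀ f, (M f).PosSemidef) (hMsum : ∑ f, M f = 1) :
    ∑ x, ∑ f, |measuredDist Δ M x f| ≤ traceNorm Δ := by
  have hΔ : IsSelfAdjoint Δ := hΔ
  have hpos := measuredDist_nonneg (CFC.posPart_nonneg Δ).posSemidef hM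
  have hneg := measuredDist_nonneg (CFC.negPart_nonneg Δ).posSemidef hM
  calc ∑ x, ∑ f, |measuredDist Δ M x f|
      ≤ ∑ x, ∑ f, (measuredDist Δ⁺ M x f + measuredDist Δ⁻ M x f) := by
        gcongr with x _ f _
        calc |measuredDist Δ M x f| = |measuredDist Δ⁺ M x f - measuredDist Δ⁻ M x f| := by
              rw [← measuredDist_sub, CFC.posPart_sub_negPart Δ]
          _ ≤ |measuredDist Δ⁺ M x f| + |measuredDist Δ⁻ M x f| := abs_sub _ _
          _ = _ := by rw [abs_of_nonneg (hpos x f), abs_of_nonneg (hneg x f)]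
    _ = (Δ⁺ + Δ⁻).trace.re := by
        simp only [sum_add_distrib, sum_sum_measuredDist hMsum, trace_add, Complex.add_re]
    _ = traceNorm Δ := by rw [CFC.posPart_add_negPart Δ, traceNorm_eq_re_trace_abs]

lemma measuredDist_le_of_posSemidef_sub [DecidableEq X] {c : ℝ} {σ : Matrix E E ℂ}
    {ρ : Matrix (X × E) (X × E) ℂ} (hρ : ((c : ℂ) • ((1 : Matrix X X ℂ) ⊗ₖ σ) - ρ).PosSemidef)
    {M : F → Matrix E E ℂ} (hM : ∀ f, (M f).PosSemidef) (x : X) (f : F) :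
    measuredDist ρ M x f ≤ c * (σ * M f).trace.re := by
  have hblock : (((c : ℂ) • ((1 : Matrix X X ℂ) ⊗ₖ σ) - ρ).submatrix (Prod.mk x) (Prod.mk x))
      = (c : ℂ) • σ - ρ.submatrix (Prod.mk x) (Prod.mk x) := by
    ext e e'
    simp [one_apply]
  have h := (hρ.submatrix (Prod.mk x)).re_trace_mul_nonneg (hM f)
  rw [hblock, Matrix.sub_mul, Matrix.smul_mul, trace_sub, trace_smul, Complex.sub_re,
    smul_eq_mul, Complex.re_ofReal_mul] at h
  exact sub_nonneg.mp h

end Measurement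

section Guessing

variable {X F : Type*} [Fintype X] [Nonempty X] [Fintype F]

def guessProb (P : X → F → ℝ) : ℝ :=
  ∑ f, (univ : Finset X).sup' univ_nonempty (fun x => P x f)

lemma guessProb_le_sum_sum {P : X → F → ℝ} (hP : ∀ x f, 0 ≤ P x f) :
    guessProb P ≤ ∑ x, ∑ f, P x f := by
  rw [sum_comm]
  exact sum_le_sum fun f _ => sup'_le _ _ fun x _ => single_le_sum (fun y _ => hP y f) (mem_univ x)

lemma sum_sum_le_card_mul_guessProb (P : X → F → ℝ) :
    ∑ x, ∑ f, P x f ≤ Fintype.card X * guessProb P := by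
  rw [sum_comm, guessProb, mul_sum]
  gcongr with f
  simpa using
    sum_le_card_nsmul univ (fun x => P x f) _ fun x _ => le_sup' (fun x => P x f) (mem_univ x)

lemma guessProb_pos {P : X → F → ℝ} (hP : ∑ x, ∑ f, P x f = 1) : 0 < guessProb P :=
  pos_of_mul_pos_right (hP ▸ one_pos |>.trans_le (sum_sum_le_card_mul_guessProb P))
    (Nat.cast_nonneg _)

lemma guessProb_le_one {P : X → F → ℝ} (hP0 : ∀ x f, 0 ≤ P x f) (hP1 : ∑ x, ∑ f, P x f = 1) :
    guessProb P ≤ 1 :=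
  hP1 ▸ guessProb_le_sum_sum hP0

lemma le_HminCl {P : X → F → ℝ} {l : ℝ} (hpos : 0 < guessProb P) (h : guessProb P ≤ 2 ^ (-l)) :
    l ≤ HminCl P := by
  change l ≤ -Real.logb 2 (guessProb P)
  rw [le_neg]
  exact (Real.logb_le_iff_le_rpow one_lt_two hpos).mpr h

lemma HminCl_nonneg {P : X → F → ℝ} (hP0 : ∀ x f, 0 ≤ P x f) (hP1 : ∑ x, ∑ f, P x f = 1) :
    0 ≤ HminCl P :=
  le_HminCl (guessProb_pos hP1) (by simpa using guessProb_le_one hP0 hP1)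

lemma HminClSmooth_nonneg {ε : ℝ} (hε : 0 ≤ ε) {P : X → F → ℝ} (hP0 : ∀ x f, 0 ≤ P x f)
    (hP1 : ∑ x, ∑ f, P x f = 1) : 0 ≤ HminClSmooth ε P :=
  Real.sSup_nonneg' ⟨0, ⟨P, hP0, by simpa using hε, by
    rw [neg_zero, Real.rpow_zero]; exact guessProb_le_one hP0 hP1⟩, le_rfl⟩

/-- For `ε < 1` every distribution in the `ε`-ball keeps mass `1 - ε`, hence guessing probability
at least `(1 - ε) / |X|`, so the supremum defining `HminClSmooth` is over a bounded set. -/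
lemma le_HminClSmooth {ε l : ℝ} {P P' : X → F → ℝ} (hP : ∑ x, ∑ f, P x f = 1) (hε : ε < 1)
    (hP'0 : ∀ x f, 0 ≤ P' x f) (hPP' : ∑ x, ∑ f, |P x f - P' x f| ≤ ε)
    (hP' : guessProb P' ≤ 2 ^ (-l)) : l ≤ HminClSmooth ε P := by
  refine le_csSup ⟨-Real.logb 2 ((1 - ε) / Fintype.card X), ?_⟩ ⟨P', hP'0, hPP', hP'⟩
  rintro l' ⟨Q, -, hPQ, hQ⟩
  have hmass : 1 - ε ≤ ∑ x, ∑ f, Q x f := by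
    have : ∑ x, ∑ f, P x f ≤ ∑ x, ∑ f, (|P x f - Q x f| + Q x f) := by
      gcongr with x _ f _
      linarith [le_abs_self (P x f - Q x f)]
    simp only [sum_add_distrib] at this
    linarith
  have hcard : (0 : ℝ) < Fintype.card X := by exact_mod_cast Fintype.card_pos
  rw [le_neg, Real.logb_le_iff_le_rpow one_lt_two (div_pos (sub_pos.mpr hε) hcard),
    div_le_iff₀ hcard]
  calc 1 - ε ≤ ∑ x, ∑ f, Q x f := hmass
    _ ≤ Fintype.card X * guessProb Q := sum_sum_le_card_mul_guessProb Q
    _ ≤ 2 ^ (-l') * Fintype.card X := by rw [mul_comm]; gcongr; exact hQ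

end Guessing

section MinEntropy

variable {X E F : Type*} [Fintype X] [DecidableEq X] [Fintype E] [DecidableEq E]
  [Fintype F] {M : F → Matrix E E ℂ}

lemma guessProb_measuredDist_le [Nonempty X] {c : ℝ} {σ : Matrix E E ℂ}
    {ρ : Matrix (X × E) (X × E) ℂ} (hσ : σ.trace = 1)
    (hρ : ((c : ℂ) • ((1 : Matrix X X ℂ) ⊗ₖ σ) - ρ).PosSemidef)
    (hM : ∀ f, (M f).PosSemidef) (hMsum : ∑ f, M f = 1) : guessProb (measuredDist ρ M) ≤ c :=
  calc guessProb (measuredDist ρ M) ≤ ∑ f, c * (σ * M f).trace.re :=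
        sum_le_sum fun f _ => sup'_le _ _ fun x _ => measuredDist_le_of_posSemidef_sub hρ hM x f
    _ = c := by rw [← mul_sum, sum_re_trace_mul_povm hMsum, hσ, Complex.one_re, mul_one]

theorem HminQ_le_HminCl_measuredDist [Nonempty X] {ρ : Matrix (X × E) (X × E) ℂ}
    (hρ : ρ.PosSemidef) (hρtr : ρ.trace = 1) (hM : ∀ f, (M f).PosSemidef) (hMsum : ∑ f, M f = 1) :
    HminQ ρ ≤ HminCl (measuredDist ρ M) := by
  have hP1 : ∑ x, ∑ f, measuredDist ρ M x f = 1 := by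
    rw [sum_sum_measuredDist hMsum, hρtr, Complex.one_re]
  refine Real.sSup_le ?_ (HminCl_nonneg (measuredDist_nonneg hρ hM) hP1)
  rintro l ⟨σ, -, hσ, hle⟩
  exact le_HminCl (guessProb_pos hP1) (guessProb_measuredDist_le hσ hle hM hMsum)

/-- Once `tr ρ ≤ ε`, the zero operator lies in the smoothing ball and admits every `l`; the
supremum of the unbounded set is then the junk value `0`. -/
lemma HminQSmooth_eq_zero {ε : ℝ} {ρ : Matrix (X × E) (X × E) ℂ} (hρ : ρ.PosSemidef)
    (hε : ρ.trace.re ≤ ε) {σ : Matrix E E ℂ} (hσ : σ.PosSemidef) (hσtr : σ.trace = 1) :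
    HminQSmooth ε ρ = 0 := by
  refine Real.sSup_of_not_bddAbove fun hbdd => not_bddAbove_univ (hbdd.mono fun l _ => ?_)
  refine ⟨0, PosSemidef.zero, ?_, σ, hσ, hσtr, ?_⟩
  · rwa [zero_sub, traceNorm_neg, hρ.traceNorm_eq]
  · rw [sub_zero]
    exact (PosSemidef.one.kronecker hσ).smul (Complex.zero_le_real.mpr (by positivity))

theorem HminQSmooth_le_HminClSmooth_measuredDist [Nonempty X] {ε : ℝ} (hε : 0 ≤ ε)
    {ρ : Matrix (X × E) (X × E) ℂ} (hρ : ρ.PosSemidef) (hρtr : ρ.trace = 1)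
    (hM : ∀ f, (M f).PosSemidef) (hMsum : ∑ f, M f = 1) :
    HminQSmooth ε ρ ≤ HminClSmooth ε (measuredDist ρ M) := by
  have hP1 : ∑ x, ∑ f, measuredDist ρ M x f = 1 := by
    rw [sum_sum_measuredDist hMsum, hρtr, Complex.one_re]
  have hnonneg := HminClSmooth_nonneg hε (measuredDist_nonneg hρ hM) hP1
  obtain hε1 | hε1 := lt_or_ge ε 1
  · refine Real.sSup_le ?_ hnonneg
    rintro l ⟨ρ', hρ', hdist, σ, -, hσ, hle⟩
    refine le_HminClSmooth hP1 hε1 (measuredDist_nonneg hρ' hM) ?_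
      (guessProb_measuredDist_le hσ hle hM hMsum)
    calc ∑ x, ∑ f, |measuredDist ρ M x f - measuredDist ρ' M x f|
        = ∑ x, ∑ f, |measuredDist (ρ' - ρ) M x f| := by
          simp only [measuredDist_sub, abs_sub_comm]
      _ ≤ traceNorm (ρ' - ρ) := sum_abs_measuredDist_le_traceNorm (hρ'.1.sub hρ.1) hM hMsum
      _ ≤ ε := hdist
  · -- the marginal `ρ_E` serves as the state on `E`
    have hmarg : (∑ x, ρ.submatrix (Prod.mk x) (Prod.mk x)).PosSemidef :=
      posSemidef_sum _ fun x _ => hρ.submatrix _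
    rwa [HminQSmooth_eq_zero hρ (by rwa [hρtr, Complex.one_re]) hmarg
      (by rw [trace_sum, ← trace_eq_sum_trace_submatrix, hρtr])]

end MinEntropy

section ClassicalQuantum

variable {X E : Type*} [DecidableEq X]

/-- The classical-quantum state `ρ_XE = ∑ₓ p(x) |x⟩⟨x| ⊗ ρ_E^x`. -/
def cqState (p : X → ℝ) (ρE : X → Matrix E E ℂ) : Matrix (X × E) (X × E) ℂ :=
  fun a b => if a.1 = b.1 then ((p a.1 : ℝ) : ℂ) * ρE a.1 a.2 b.2 else 0

lemma cqState_eq_sum_kronecker [Fintype X] (p : X → ℝ) (ρE : X → Matrix E E ℂ) :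
    cqState p ρE = ∑ x, diagonal (Pi.single x ((p x : ℝ) : ℂ)) ⊗ₖ ρE x := by
  ext ⟨x, e⟩ ⟨x', e'⟩
  by_cases h : x = x' <;>
    simp [cqState, h, Matrix.sum_apply, kroneckerMap_apply, Pi.single_apply]

lemma cqState_posSemidef [Fintype X] [Fintype E] [DecidableEq E] {p : X → ℝ}
    (hp : ∀ x, 0 ≤ p x) {ρE : X → Matrix E E ℂ} (hρE : ∀ x, (ρE x).PosSemidef) :
    (cqState p ρE).PosSemidef := by
  rw [cqState_eq_sum_kronecker]
  refine posSemidef_sum _ fun x _ => PosSemidef.kronecker ?_ (hρE x)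
  exact posSemidef_diagonal_iff.mpr (Pi.single_nonneg.mpr (Complex.zero_le_real.mpr (hp x)))

lemma submatrix_cqState (p : X → ℝ) (ρE : X → Matrix E E ℂ) (x : X) :
    (cqState p ρE).submatrix (Prod.mk x) (Prod.mk x) = ((p x : ℝ) : ℂ) • ρE x := by
  ext e e'
  simp [cqState]

lemma trace_cqState [Fintype X] [Fintype E] {p : X → ℝ} (hp : ∑ x, p x = 1)
    {ρE : X → Matrix E E ℂ} (hρE : ∀ x, (ρE x).trace = 1) : (cqState p ρE).trace = 1 := by
  simp [trace_eq_sum_trace_submatrix, submatrix_cqState, hρE, ← Complex.ofReal_sum, hp]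

lemma measuredDist_cqState {F : Type*} [Fintype E] (p : X → ℝ) (ρE : X → Matrix E E ℂ)
    (M : F → Matrix E E ℂ) :
    measuredDist (cqState p ρE) M = fun x f => p x * ((ρE x) * M f).trace.re := by
  ext x f
  rw [measuredDist, submatrix_cqState, Matrix.smul_mul, trace_smul, smul_eq_mul,
    Complex.re_ofReal_mul]

end ClassicalQuantum

theorem min_entropy_data_processing_general
    {X E F : Type*} [Fintype X] [DecidableEq X] [Nonempty X]
    [Fintype E] [DecidableEq E] [Fintype F]
    (p : X → ℝ) (hp : ∀ x, 0 ≤ p x) (hpsum : ∑ x : X, p x = 1)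
    (ρE : X → Matrix E E ℂ)
    (hρE : ∀ x, (ρE x).PosSemidef) (hρEtr : ∀ x, (ρE x).trace = 1)
    (M : F → Matrix E E ℂ)
    (hM : ∀ f, (M f).PosSemidef) (hMsum : ∑ f : F, M f = 1) :
    HminQ (fun a b => if a.1 = b.1 then ((p a.1 : ℝ) : ℂ) * ρE a.1 a.2 b.2 else 0)
        ≤ HminCl (fun x f => p x * ((ρE x) * M f).trace.re) ∧
    ∀ ε : ℝ, 0 ≤ ε →
      HminQSmooth ε
          (fun a b => if a.1 = b.1 then ((p a.1 : ℝ) : ℂ) * ρE a.1 a.2 b.2 else 0)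
        ≤ HminClSmooth ε (fun x f => p x * ((ρE x) * M f).trace.re) := by
  change HminQ (cqState p ρE) ≤ _ ∧ ∀ ε : ℝ, 0 ≤ ε → HminQSmooth ε (cqState p ρE) ≤ _
  rw [← measuredDist_cqState p ρE M]
  have hρ := cqState_posSemidef hp hρE
  have hρtr := trace_cqState hpsum hρEtr
  exact ⟨HminQ_le_HminCl_measuredDist hρ hρtr hM hMsum,
    fun ε hε => HminQSmooth_le_HminClSmooth_measuredDist hε hρ hρtr hM hMsum⟩

/-- Data processing for min-entropy under measurement. For a
classical-quantum state `ρ_{XE} = ∑_x p(x) |x⟩⟨x| ⊗ ρ_E^x` and any POVM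
`{M_f}` on `E` producing the classical joint distribution
`P(x,f) = p(x) tr(ρ_E^x M_f)`, we have `H_min(X|F)_P ≥ H_min(X|E)_ρ`, and the
same holds for the `ε`-smooth versions. -/
theorem min_entropy_data_processing
    {X E F : Type*} [Fintype X] [DecidableEq X] [Nonempty X]
    [Fintype E] [DecidableEq E] [Fintype F] [DecidableEq F]
    (p : X → ℝ) (hp : ∀ x, 0 ≤ p x) (hpsum : ∑ x : X, p x = 1)
    (ρE : X → Matrix E E ℂ)
    (hρE : ∀ x, (ρE x).PosSemidef) (hρEtr : ∀ x, (ρE x).trace = 1)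
    (M : F → Matrix E E ℂ)
    (hM : ∀ f, (M f).PosSemidef) (hMsum : ∑ f : F, M f = 1) :
    HminQ (fun a b => if a.1 = b.1 then ((p a.1 : ℝ) : ℂ) * ρE a.1 a.2 b.2 else 0)
        ≤ HminCl (fun x f => p x * ((ρE x) * M f).trace.re) ∧
    ∀ ε : ℝ, 0 ≤ ε →
      HminQSmooth ε
          (fun a b => if a.1 = b.1 then ((p a.1 : ℝ) : ℂ) * ρE a.1 a.2 b.2 else 0)
        ≤ HminClSmooth ε (fun x f => p x * ((ρE x) * M f).trace.re) :=
  min_entropy_data_processing_general p hp hpsum ρE hρE hρEtr M hM hMsum
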